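/- arXiv:1512.07887 — 3 statements merged into one kernel-verified Lean document; each statement's English description precedes it below -/
import Mathlib

section
/- Let (Ω, ℱ, P) be a probability space, T, M, M₀ > 0, and let Y : [0,T] × Ω → ℝ^d, Σ : [0,T] × Ω → ℝ, b : [0,T] × Ω → ℝ^d be measurable processes such that t ↦ E‖Y(t)‖² is finite and measurable and: (i) E‖Y(0)‖² ≤ M₀; (ii) for every t ∈ [0,T], E‖Y(t)‖² = E‖Y(0)‖² + ∫₀ᵗ E[Σ(τ) + 2⟨b(τ), Y(τ)⟩] dτ; (iii) for almost every (τ, ω), |Σ(τ,ω)| ≤ M(1 + ‖Y(τ,ω)‖² + E‖Y(τ)‖²) and ‖b(τ,ω)‖ ≤ M(1 + ‖Y(τ,ω)‖ + (E‖Y(τ)‖²)^{1/2}). Then for every t ∈ [0,T], E‖Y(t)‖² ≤ (M₀ + 2MT) e^{7MT}. -/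
/-!
Write `φ t = E‖Y t‖²`. Pointwise, Cauchy–Schwarz and AM-GM turn the growth bounds into
`|Σ + 2⟪b, Y⟫| ≤ 2M(1 + φ) + 5M‖Y‖²`, so the integrand `ψ` of the moment identity satisfies
`ψ ≤ 2M + 7Mφ`. Hence `φ s ≤ a + 7M ∫₀ˢ φ` on `[0, t]` with `a = φ 0 + 2Mt`, and Grönwall's
inequality, proved by showing that `e^{-7Ms} (a + 7M ∫₀ˢ φ)` is antitone, gives `φ t ≤ a e^{7Mt}`.
-/

open MeasureTheory Set Real
open scoped RealInnerProductSpace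

theorem le_mul_exp_of_le_add_mul_integral {φ : ℝ → ℝ} {a K t : ℝ} (ht : 0 ≤ t) (hK : 0 ≤ K)
    (hφ : ContinuousOn φ (Icc 0 t))
    (h : ∀ s ∈ Icc 0 t, φ s ≤ a + K * ∫ τ in 0..s, φ τ) :
    φ t ≤ a * exp (K * t) := by
  set F : ℝ → ℝ := fun s => a + K * ∫ τ in 0..s, φ τ
  have hFcont : ContinuousOn F (Icc 0 t) := by
    have := intervalIntegral.continuousOn_primitive_interval'
      (hφ.intervalIntegrable_of_Icc (μ := volume) ht) left_mem_uIcc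
    rw [uIcc_of_le ht] at this
    exact continuousOn_const.add (continuousOn_const.mul this)
  have hFderiv : ∀ x ∈ Ioo 0 t, HasDerivAt F (K * φ x) x := by
    intro x hx
    have hx' : x ∈ Icc 0 t := Ioo_subset_Icc_self hx
    refine (intervalIntegral.integral_hasDerivAt_right ?_ ?_ ?_).const_mul K |>.const_add a
    · exact (hφ.mono (Icc_subset_Icc le_rfl hx'.2)).intervalIntegrable_of_Icc hx'.1
    · exact (hφ.mono Ioo_subset_Icc_self).stronglyMeasurableAtFilter isOpen_Ioo x hx
    · exact hφ.continuousAt (Icc_mem_nhds hx.1 hx.2)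
  -- `exp (-K s) * F s` is antitone because `F' = K φ ≤ K F`.
  have hanti : AntitoneOn (fun s => exp (-K * s) * F s) (Icc 0 t) := by
    refine antitoneOn_of_hasDerivWithinAt_nonpos (convex_Icc 0 t)
      (((continuous_const.mul continuous_id).rexp).continuousOn.mul hFcont)
      (fun x hx => ?_) (f' := fun x => exp (-K * x) * (K * (φ x - F x))) ?_
    · rw [interior_Icc] at hx
      have hexp := ((hasDerivAt_id' x).const_mul (-K)).exp
      exact (hexp.mul (hFderiv x hx)).hasDerivWithinAt.congr_deriv (by ring)
    · intro x hx
      rw [interior_Icc] at hx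
      exact mul_nonpos_of_nonneg_of_nonpos (exp_pos _).le
        (mul_nonpos_of_nonneg_of_nonpos hK (sub_nonpos.2 (h x (Ioo_subset_Icc_self hx))))
  have hFt : exp (-K * t) * F t ≤ a := by
    simpa [F] using hanti ⟨le_rfl, ht⟩ ⟨ht, le_rfl⟩ ht
  calc φ t ≤ F t := h t ⟨ht, le_rfl⟩
    _ = exp (-K * t) * F t * exp (K * t) := by rw [mul_right_comm, ← exp_add]; simp
    _ ≤ a * exp (K * t) := by gcongr

theorem le_add_mul_mul_exp_of_eq_add_integral {φ ψ : ℝ → ℝ} {A K T : ℝ} (hA : 0 ≤ A)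
    (hK : 0 ≤ K) (hφ₀ : 0 ≤ φ 0) (hφ : ∀ t ∈ Icc 0 T, φ t = φ 0 + ∫ τ in 0..t, ψ τ)
    (hψ : ∀ᵐ τ ∂volume.restrict (Icc 0 T), ψ τ ≤ A + K * φ τ) :
    ∀ t ∈ Icc 0 T, φ t ≤ (φ 0 + A * t) * exp (K * t) := by
  intro t ht
  have hIcc_sub : ∀ s ∈ Icc 0 t, Icc 0 s ⊆ Icc 0 t := fun s hs => Icc_subset_Icc le_rfl hs.2
  have hφs : ∀ s ∈ Icc 0 t, φ s = φ 0 + ∫ τ in 0..s, ψ τ :=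
    fun s hs => hφ s ⟨hs.1, hs.2.trans ht.2⟩
  by_cases hψint : IntervalIntegrable ψ volume 0 t
  swap
  -- the Bochner integral of a non-integrable function is `0`
  · rw [hφs t ⟨ht.1, le_rfl⟩, intervalIntegral.integral_undef hψint, add_zero]
    have hA_t : 0 ≤ A * t := mul_nonneg hA ht.1
    exact (le_add_of_nonneg_right hA_t).trans
      (le_mul_of_one_le_right (add_nonneg hφ₀ hA_t) (one_le_exp (mul_nonneg hK ht.1)))
  have hcont : ContinuousOn φ (Icc 0 t) := by
    have := intervalIntegral.continuousOn_primitive_interval' hψint left_mem_uIcc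
    rw [uIcc_of_le ht.1] at this
    exact (continuousOn_const.add this).congr hφs
  refine le_mul_exp_of_le_add_mul_integral ht.1 hK hcont fun s hs => ?_
  have hφint : IntervalIntegrable φ volume 0 s :=
    (hcont.mono (hIcc_sub s hs)).intervalIntegrable_of_Icc hs.1
  have hψle : ∫ τ in 0..s, ψ τ ≤ ∫ τ in 0..s, (A + K * φ τ) := by
    refine intervalIntegral.integral_mono_ae_restrict hs.1
      (hψint.mono_set (by rw [uIcc_of_le hs.1, uIcc_of_le ht.1]; exact hIcc_sub s hs))
      (intervalIntegrable_const.add (hφint.const_mul K)) ?_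
    exact ae_restrict_of_ae_restrict_of_subset (Icc_subset_Icc le_rfl (hs.2.trans ht.2)) hψ
  rw [intervalIntegral.integral_add intervalIntegrable_const (hφint.const_mul K),
    intervalIntegral.integral_const, intervalIntegral.integral_const_mul, sub_zero,
    smul_eq_mul] at hψle
  have hAs : s * A ≤ A * t := by rw [mul_comm]; exact mul_le_mul_of_nonneg_left hs.2 hA
  linarith [hφs s hs]

theorem abs_add_two_inner_le {E : Type*} [NormedAddCommGroup E] [InnerProductSpace ℝ E]
    {M m S : ℝ} {v y : E} (hm : 0 ≤ m) (hS : |S| ≤ M * (1 + ‖y‖ ^ 2 + m ^ 2))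
    (hv : ‖v‖ ≤ M * (1 + ‖y‖ + m)) :
    |S + 2 * ⟪v, y⟫| ≤ 2 * M * (1 + m ^ 2) + 5 * M * ‖y‖ ^ 2 := by
  have hM : 0 ≤ M := nonneg_of_mul_nonneg_left ((norm_nonneg v).trans hv) (by positivity)
  have hinner : |⟪v, y⟫| ≤ M * (1 + ‖y‖ + m) * ‖y‖ :=
    (abs_real_inner_le_norm v y).trans (mul_le_mul_of_nonneg_right hv (norm_nonneg y))
  -- `2 (1 + ‖y‖ + m) ‖y‖ ≤ 1 + m² + 4 ‖y‖²` by AM-GM on `‖y‖` and `m ‖y‖`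
  have hamgm : 2 * (1 + ‖y‖ + m) * ‖y‖ ≤ 1 + m ^ 2 + 4 * ‖y‖ ^ 2 := by
    nlinarith [sq_nonneg (‖y‖ - 1), sq_nonneg (m - ‖y‖)]
  calc |S + 2 * ⟪v, y⟫| ≤ |S| + 2 * |⟪v, y⟫| := by
        simpa [abs_mul] using abs_add_le S (2 * ⟪v, y⟫)
    _ ≤ M * (1 + ‖y‖ ^ 2 + m ^ 2) + M * (2 * (1 + ‖y‖ + m) * ‖y‖) := by nlinarith
    _ ≤ M * (1 + ‖y‖ ^ 2 + m ^ 2) + M * (1 + m ^ 2 + 4 * ‖y‖ ^ 2) := by gcongr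
    _ = 2 * M * (1 + m ^ 2) + 5 * M * ‖y‖ ^ 2 := by ring

theorem abs_integral_add_two_inner_le {Ω E : Type*} [MeasurableSpace Ω] {P : Measure Ω}
    [IsProbabilityMeasure P] [NormedAddCommGroup E] [InnerProductSpace ℝ E] {M : ℝ}
    {S : Ω → ℝ} {v y : Ω → E} (hy : Integrable (fun ω => ‖y ω‖ ^ 2) P)
    (h : ∀ᵐ ω ∂P, |S ω| ≤ M * (1 + ‖y ω‖ ^ 2 + ∫ ω, ‖y ω‖ ^ 2 ∂P) ∧
      ‖v ω‖ ≤ M * (1 + ‖y ω‖ + √(∫ ω, ‖y ω‖ ^ 2 ∂P))) :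
    |∫ ω, (S ω + 2 * ⟪v ω, y ω⟫) ∂P| ≤ 2 * M + 7 * M * ∫ ω, ‖y ω‖ ^ 2 ∂P := by
  set m := ∫ ω, ‖y ω‖ ^ 2 ∂P
  have hm : 0 ≤ m := integral_nonneg fun ω => by positivity
  have hdom : Integrable (fun ω => 2 * M * (1 + m) + 5 * M * ‖y ω‖ ^ 2) P :=
    (integrable_const _).add (hy.const_mul _)
  calc |∫ ω, (S ω + 2 * ⟪v ω, y ω⟫) ∂P|
      ≤ ∫ ω, (2 * M * (1 + m) + 5 * M * ‖y ω‖ ^ 2) ∂P := by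
        refine norm_integral_le_of_norm_le (f := fun ω => S ω + 2 * ⟪v ω, y ω⟫) hdom ?_
        filter_upwards [h] with ω ⟨hS, hv⟩
        have := abs_add_two_inner_le (sqrt_nonneg m) (by rwa [sq_sqrt hm]) hv
        rwa [sq_sqrt hm] at this
    _ = 2 * M + 7 * M * m := by
        rw [integral_add (integrable_const _) (hy.const_mul _), integral_const, integral_const_mul]
        simp only [probReal_univ, one_smul]
        ring

theorem stmt_2_general (d : ℕ) (Ω : Type) [MeasurableSpace Ω] (P : Measure Ω)
    [IsProbabilityMeasure P] (T M M₀ : ℝ) (hM : 0 < M)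
    (Y : ℝ → Ω → EuclideanSpace ℝ (Fin d)) (Sig : ℝ → Ω → ℝ)
    (b : ℝ → Ω → EuclideanSpace ℝ (Fin d))
    (hYint : ∀ t ∈ Set.Icc (0:ℝ) T, Integrable (fun ω => ‖Y t ω‖ ^ 2) P)
    (h0 : ∫ ω, ‖Y 0 ω‖ ^ 2 ∂P ≤ M₀)
    (hii : ∀ t ∈ Set.Icc (0:ℝ) T,
      ∫ ω, ‖Y t ω‖ ^ 2 ∂P
        = (∫ ω, ‖Y 0 ω‖ ^ 2 ∂P)
          + ∫ τ in (0:ℝ)..t, (∫ ω, (Sig τ ω + 2 * ⟪b τ ω, Y τ ω⟫) ∂P))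
    (hiii : ∀ᵐ p ∂((volume.restrict (Set.Icc (0:ℝ) T)).prod P),
      |Sig p.1 p.2| ≤ M * (1 + ‖Y p.1 p.2‖ ^ 2 + ∫ ω, ‖Y p.1 ω‖ ^ 2 ∂P) ∧
      ‖b p.1 p.2‖ ≤ M * (1 + ‖Y p.1 p.2‖ + Real.sqrt (∫ ω, ‖Y p.1 ω‖ ^ 2 ∂P))) :
    ∀ t ∈ Set.Icc (0:ℝ) T,
      ∫ ω, ‖Y t ω‖ ^ 2 ∂P ≤ (M₀ + 2 * M * T) * Real.exp (7 * M * T) := by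
  intro t ht
  have hφ₀ : 0 ≤ ∫ ω, ‖Y 0 ω‖ ^ 2 ∂P := integral_nonneg fun ω => by positivity
  have hψ : ∀ᵐ τ ∂volume.restrict (Icc 0 T),
      ∫ ω, (Sig τ ω + 2 * ⟪b τ ω, Y τ ω⟫) ∂P ≤ 2 * M + 7 * M * ∫ ω, ‖Y τ ω‖ ^ 2 ∂P := by
    filter_upwards [Measure.ae_ae_of_ae_prod hiii, ae_restrict_mem measurableSet_Icc]
      with τ hτ hτT
    exact (le_abs_self _).trans (abs_integral_add_two_inner_le (hYint τ hτT) hτ)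
  calc ∫ ω, ‖Y t ω‖ ^ 2 ∂P
      ≤ (∫ ω, ‖Y 0 ω‖ ^ 2 ∂P + 2 * M * t) * exp (7 * M * t) :=
        le_add_mul_mul_exp_of_eq_add_integral (by positivity) (by positivity) hφ₀ hii hψ t ht
    _ ≤ (M₀ + 2 * M * T) * exp (7 * M * T) := by
        have htT : t ≤ T := ht.2
        have hC : 0 ≤ M₀ + 2 * M * T := by nlinarith [ht.1]
        gcongr

/-- uniform second-moment bound (Lemma 1 of the paper).  If the second
moment of `Y` evolves according to `E‖Y(t)‖² = E‖Y(0)‖² + ∫₀ᵗ E[Σ(τ) + 2⟨b(τ),Y(τ)⟩] dτ`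
with `|Σ| ≤ M(1 + ‖Y‖² + E‖Y‖²)`, `‖b‖ ≤ M(1 + ‖Y‖ + (E‖Y‖²)^{1/2})` and
`E‖Y(0)‖² ≤ M₀`, then `E‖Y(t)‖² ≤ (M₀ + 2MT)e^{7MT}` on `[0,T]`. -/
theorem stmt_2 (d : ℕ) (Ω : Type) [MeasurableSpace Ω] (P : Measure Ω)
    [IsProbabilityMeasure P] (T M M₀ : ℝ) (hT : 0 < T) (hM : 0 < M) (hM₀ : 0 < M₀)
    (Y : ℝ → Ω → EuclideanSpace ℝ (Fin d)) (Sig : ℝ → Ω → ℝ)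
    (b : ℝ → Ω → EuclideanSpace ℝ (Fin d))
    (hYmeas : Measurable (Function.uncurry Y))
    (hSmeas : Measurable (Function.uncurry Sig))
    (hbmeas : Measurable (Function.uncurry b))
    (hYint : ∀ t ∈ Set.Icc (0:ℝ) T, Integrable (fun ω => ‖Y t ω‖ ^ 2) P)
    (hYmm : Measurable fun t => ∫ ω, ‖Y t ω‖ ^ 2 ∂P)
    (h0 : ∫ ω, ‖Y 0 ω‖ ^ 2 ∂P ≤ M₀)
    (hii : ∀ t ∈ Set.Icc (0:ℝ) T,
      ∫ ω, ‖Y t ω‖ ^ 2 ∂P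
        = (∫ ω, ‖Y 0 ω‖ ^ 2 ∂P)
          + ∫ τ in (0:ℝ)..t, (∫ ω, (Sig τ ω + 2 * ⟪b τ ω, Y τ ω⟫) ∂P))
    (hiii : ∀ᵐ p ∂((volume.restrict (Set.Icc (0:ℝ) T)).prod P),
      |Sig p.1 p.2| ≤ M * (1 + ‖Y p.1 p.2‖ ^ 2 + ∫ ω, ‖Y p.1 ω‖ ^ 2 ∂P) ∧
      ‖b p.1 p.2‖ ≤ M * (1 + ‖Y p.1 p.2‖ + Real.sqrt (∫ ω, ‖Y p.1 ω‖ ^ 2 ∂P))) :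
    ∀ t ∈ Set.Icc (0:ℝ) T,
      ∫ ω, ‖Y t ω‖ ^ 2 ∂P ≤ (M₀ + 2 * M * T) * Real.exp (7 * M * T) :=
  stmt_2_general d Ω P T M M₀ hM Y Sig b hYint h0 hii hiii
end

section
/- Let (Ω, ℱ, P) be a probability space, T, M, C₁ > 0, 0 < ε ≤ 1, and let Y : [0,T] × Ω → ℝ^d, Σ : [0,T] × Ω → ℝ, b : [0,T] × Ω → ℝ^d be measurable processes such that: (i) for all 0 ≤ s ≤ t ≤ T, E‖Y(t) − Y(s)‖² = ∫ₛᵗ E[Σ(τ) + 2⟨b(τ), Y(τ) − Y(s)⟩] dτ; (ii) E‖Y(τ)‖² ≤ C₁ for all τ; (iii) for almost every (τ,ω), |Σ(τ,ω)| ≤ ε(1 + ‖Y(τ,ω)‖² + C₁) and ‖b(τ,ω)‖ ≤ M(1 + ‖Y(τ,ω)‖ + C₁^{1/2}). Then there exist constants a and c depending only on M, T, C₁ such that for all 0 ≤ s ≤ t ≤ T, E‖Y(t) − Y(s)‖² ≤ ε a (t − s) + c (t − s)^{3/2}. -/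
/-!
Write `F(u) = E‖Y(u) - Y(s)‖²` and `g(τ) = E[Σ(τ) + 2⟨b(τ), Y(τ) - Y(s)⟩]`, so that `F' = g`.
Young's inequality `2⟨b, Δ⟩ ≤ r‖b‖² + ‖Δ‖²/r` together with the growth bounds gives
`g(τ) ≤ ε A + B r + F(τ) / r` almost everywhere, with `A = 1 + 2C₁` and `B = 3M²A`.
With `r = 1` and the crude bound `F ≤ 4 C₁` this makes `F` grow at most linearly,
`F(τ) ≤ K (τ - s)` with `K = A + B + 4C₁`; feeding this back with `r = √(t - s)` and
integrating gives the `(t - s)^{3/2}` term.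
-/

open MeasureTheory Set
open scoped RealInnerProductSpace

lemma integral_le_integral_of_ae_le_of_integral_nonneg {α : Type*} [MeasurableSpace α]
    {μ : Measure α} {f g : α → ℝ} (hg : Integrable g μ) (hg₀ : 0 ≤ ∫ x, g x ∂μ)
    (hfg : f ≤ᵐ[μ] g) : ∫ x, f x ∂μ ≤ ∫ x, g x ∂μ := by
  by_cases hf : Integrable f μ
  · exact integral_mono_ae hf hg hfg
  · rwa [integral_undef hf]

lemma intervalIntegral_le_of_ae_le_of_integral_nonneg {f g : ℝ → ℝ} {a b : ℝ} (hab : a ≤ b)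
    (hg : IntervalIntegrable g volume a b) (hg₀ : 0 ≤ ∫ x in a..b, g x)
    (hfg : ∀ᵐ x ∂volume.restrict (Icc a b), f x ≤ g x) :
    ∫ x in a..b, f x ≤ ∫ x in a..b, g x := by
  rw [intervalIntegral.integral_of_le hab] at hg₀ ⊢
  rw [intervalIntegral.integral_of_le hab]
  exact integral_le_integral_of_ae_le_of_integral_nonneg hg.1 hg₀
    (ae_restrict_of_ae_restrict_of_subset Ioc_subset_Icc_self hfg)

lemma intervalIntegral_const_add_mul_sub (p q s t : ℝ) :
    ∫ τ in s..t, (p + q * (τ - s)) = p * (t - s) + q * (t - s) ^ 2 / 2 := by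
  rw [intervalIntegral.integral_add intervalIntegrable_const
      ((by fun_prop : Continuous fun τ : ℝ => q * (τ - s)).intervalIntegrable s t),
    intervalIntegral.integral_const_mul, intervalIntegral.integral_comp_sub_right (fun x => x)]
  simp
  ring

section Increment

variable {F g : ℝ → ℝ} {s t : ℝ}

lemma le_mul_sub_of_eq_intervalIntegral {K : ℝ} (hK : 0 ≤ K)
    (hF : ∀ u ∈ Icc s t, F u = ∫ τ in s..u, g τ)
    (hg : ∀ᵐ τ ∂volume.restrict (Icc s t), g τ ≤ K) :
    ∀ u ∈ Icc s t, F u ≤ K * (u - s) := by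
  intro u hu
  have hgu := ae_restrict_of_ae_restrict_of_subset (Icc_subset_Icc_right hu.2) hg
  calc F u = ∫ τ in s..u, g τ := hF u hu
    _ ≤ ∫ _ in s..u, K :=
        intervalIntegral_le_of_ae_le_of_integral_nonneg hu.1 intervalIntegrable_const
          (by simpa using mul_nonneg (sub_nonneg.2 hu.1) hK) hgu
    _ = K * (u - s) := by simp [mul_comm]

theorem le_mul_add_mul_sqrt_of_eq_intervalIntegral {α β D : ℝ} (hst : s ≤ t) (hα : 0 ≤ α)
    (hβ : 0 ≤ β) (hF : ∀ u ∈ Icc s t, F u = ∫ τ in s..u, g τ) (hFD : ∀ u ∈ Icc s t, F u ≤ D)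
    (hg : ∀ r > 0, ∀ᵐ τ ∂volume.restrict (Icc s t), g τ ≤ α + β * r + r⁻¹ * F τ) :
    F t ≤ α * (t - s) + (β + (α + β + D) / 2) * ((t - s) * √(t - s)) := by
  set K := α + β + D
  have hD : 0 ≤ D := by simpa [hF s ⟨le_rfl, hst⟩] using hFD s ⟨le_rfl, hst⟩
  have hlin : ∀ u ∈ Icc s t, F u ≤ K * (u - s) := by
    refine le_mul_sub_of_eq_intervalIntegral (by positivity) hF ?_
    filter_upwards [hg 1 one_pos, ae_restrict_mem measurableSet_Icc] with τ hτ hτI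
    linarith [hFD τ hτI]
  rcases hst.eq_or_lt with rfl | hlt
  · simp [hF s ⟨le_rfl, le_rfl⟩]
  set r := √(t - s)
  have hr : 0 < r := Real.sqrt_pos.2 (sub_pos.2 hlt)
  have hrr : r ^ 2 = t - s := Real.sq_sqrt (sub_pos.2 hlt).le
  have hbound : ∀ᵐ τ ∂volume.restrict (Icc s t), g τ ≤ (α + β * r) + r⁻¹ * K * (τ - s) := by
    filter_upwards [hg r hr, ae_restrict_mem measurableSet_Icc] with τ hτ hτI
    have := mul_le_mul_of_nonneg_left (hlin τ hτI) (inv_pos.2 hr).le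
    linarith
  have hint : ∫ τ in s..t, ((α + β * r) + r⁻¹ * K * (τ - s))
      = α * (t - s) + (β + K / 2) * ((t - s) * r) := by
    rw [intervalIntegral_const_add_mul_sub, ← hrr]
    field_simp
    ring
  calc F t = ∫ τ in s..t, g τ := hF t ⟨hst, le_rfl⟩
    _ ≤ ∫ τ in s..t, ((α + β * r) + r⁻¹ * K * (τ - s)) :=
        intervalIntegral_le_of_ae_le_of_integral_nonneg hst
          (Continuous.intervalIntegrable (by fun_prop) s t)
          (by rw [hint]; positivity) hbound
    _ = α * (t - s) + (β + K / 2) * ((t - s) * r) := hint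

end Increment

lemma integral_norm_sub_sq_le {E Ω : Type*} [NormedAddCommGroup E] [MeasurableSpace Ω]
    {P : Measure Ω} {X Z : Ω → E} (hX : MemLp X 2 P) (hZ : MemLp Z 2 P) :
    ∫ ω, ‖X ω - Z ω‖ ^ 2 ∂P ≤ 2 * ∫ ω, ‖X ω‖ ^ 2 ∂P + 2 * ∫ ω, ‖Z ω‖ ^ 2 ∂P := by
  have hXi := (memLp_two_iff_integrable_sq_norm hX.1).1 hX
  have hZi := (memLp_two_iff_integrable_sq_norm hZ.1).1 hZ
  rw [← integral_const_mul, ← integral_const_mul,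
    ← integral_add (hXi.const_mul 2) (hZi.const_mul 2)]
  refine integral_mono ((memLp_two_iff_integrable_sq_norm (hX.sub hZ).1).1 (hX.sub hZ))
    ((hXi.const_mul 2).add (hZi.const_mul 2)) fun ω => ?_
  have := norm_sub_le (X ω) (Z ω)
  have := norm_nonneg (X ω - Z ω)
  nlinarith [sq_nonneg (‖X ω‖ - ‖Z ω‖)]

section InnerProduct

variable {E : Type*} [NormedAddCommGroup E] [InnerProductSpace ℝ E]

lemma two_mul_inner_le_mul_norm_sq_add_inv_mul_norm_sq {r : ℝ} (hr : 0 < r) (u v : E) :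
    2 * ⟪u, v⟫ ≤ r * ‖u‖ ^ 2 + r⁻¹ * ‖v‖ ^ 2 := by
  have hsq : r⁻¹ * (r * ‖u‖ - ‖v‖) ^ 2 = r * ‖u‖ ^ 2 - 2 * (‖u‖ * ‖v‖) + r⁻¹ * ‖v‖ ^ 2 := by
    field_simp
    ring
  have : 0 ≤ r⁻¹ * (r * ‖u‖ - ‖v‖) ^ 2 := by positivity
  linarith [real_inner_le_norm u v]

lemma sq_le_three_mul_sq_mul_of_le_mul_add_add {x M y c : ℝ} (hx : 0 ≤ x)
    (h : x ≤ M * (1 + y + c)) : x ^ 2 ≤ 3 * M ^ 2 * (1 + y ^ 2 + c ^ 2) := by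
  have h3 : (1 + y + c) ^ 2 ≤ 3 * (1 + y ^ 2 + c ^ 2) := by
    nlinarith [sq_nonneg (1 - y), sq_nonneg (1 - c), sq_nonneg (y - c)]
  calc x ^ 2 ≤ (M * (1 + y + c)) ^ 2 := pow_le_pow_left₀ hx h 2
    _ = M ^ 2 * (1 + y + c) ^ 2 := by ring
    _ ≤ M ^ 2 * (3 * (1 + y ^ 2 + c ^ 2)) := by gcongr
    _ = 3 * M ^ 2 * (1 + y ^ 2 + c ^ 2) := by ring

lemma add_two_mul_inner_le {σ ε M C r : ℝ} {β y v : E} (hr : 0 < r) (hC : 0 ≤ C)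
    (hσ : |σ| ≤ ε * (1 + ‖y‖ ^ 2 + C)) (hβ : ‖β‖ ≤ M * (1 + ‖y‖ + √C)) :
    σ + 2 * ⟪β, v⟫ ≤ (ε + 3 * M ^ 2 * r) * (1 + ‖y‖ ^ 2 + C) + r⁻¹ * ‖v‖ ^ 2 := by
  have hβ2 : ‖β‖ ^ 2 ≤ 3 * M ^ 2 * (1 + ‖y‖ ^ 2 + C) := by
    simpa [Real.sq_sqrt hC] using sq_le_three_mul_sq_mul_of_le_mul_add_add (norm_nonneg β) hβ
  have := two_mul_inner_le_mul_norm_sq_add_inv_mul_norm_sq hr β v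
  nlinarith [le_abs_self σ]

variable {Ω : Type*} [MeasurableSpace Ω] {P : Measure Ω}

lemma integral_add_two_mul_inner_le [IsProbabilityMeasure P] {σ : Ω → ℝ} {β Z V : Ω → E}
    {ε M C r : ℝ} (hr : 0 < r) (hε : 0 ≤ ε) (hC : 0 ≤ C)
    (hZ : Integrable (fun ω => ‖Z ω‖ ^ 2) P) (hZC : ∫ ω, ‖Z ω‖ ^ 2 ∂P ≤ C)
    (hV : Integrable (fun ω => ‖V ω‖ ^ 2) P)
    (hbd : ∀ᵐ ω ∂P, |σ ω| ≤ ε * (1 + ‖Z ω‖ ^ 2 + C) ∧ ‖β ω‖ ≤ M * (1 + ‖Z ω‖ + √C)) :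
    ∫ ω, (σ ω + 2 * ⟪β ω, V ω⟫) ∂P
      ≤ ε * (1 + 2 * C) + 3 * M ^ 2 * (1 + 2 * C) * r + r⁻¹ * ∫ ω, ‖V ω‖ ^ 2 ∂P := by
  have hZ₁ : Integrable (fun ω => 1 + ‖Z ω‖ ^ 2) P := (integrable_const 1).add hZ
  have hm : Integrable (fun ω => 1 + ‖Z ω‖ ^ 2 + C) P := hZ₁.add (integrable_const C)
  have hbound : Integrable
      (fun ω => (ε + 3 * M ^ 2 * r) * (1 + ‖Z ω‖ ^ 2 + C) + r⁻¹ * ‖V ω‖ ^ 2) P :=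
    (hm.const_mul _).add (hV.const_mul _)
  have heq : ∫ ω, ((ε + 3 * M ^ 2 * r) * (1 + ‖Z ω‖ ^ 2 + C) + r⁻¹ * ‖V ω‖ ^ 2) ∂P
      = (ε + 3 * M ^ 2 * r) * (1 + ∫ ω, ‖Z ω‖ ^ 2 ∂P + C) + r⁻¹ * ∫ ω, ‖V ω‖ ^ 2 ∂P := by
    rw [integral_add (hm.const_mul _) (hV.const_mul _), integral_const_mul, integral_const_mul,
      integral_add hZ₁ (integrable_const C), integral_add (integrable_const 1) hZ]
    simp
  have hZ₀ : 0 ≤ ∫ ω, ‖Z ω‖ ^ 2 ∂P := integral_nonneg fun ω => by positivity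
  have hV₀ : 0 ≤ ∫ ω, ‖V ω‖ ^ 2 ∂P := integral_nonneg fun ω => by positivity
  calc ∫ ω, (σ ω + 2 * ⟪β ω, V ω⟫) ∂P
      ≤ ∫ ω, ((ε + 3 * M ^ 2 * r) * (1 + ‖Z ω‖ ^ 2 + C) + r⁻¹ * ‖V ω‖ ^ 2) ∂P :=
        integral_le_integral_of_ae_le_of_integral_nonneg hbound (by rw [heq]; positivity)
          (hbd.mono fun ω h => add_two_mul_inner_le hr hC h.1 h.2)
    _ = (ε + 3 * M ^ 2 * r) * (1 + ∫ ω, ‖Z ω‖ ^ 2 ∂P + C) + r⁻¹ * ∫ ω, ‖V ω‖ ^ 2 ∂P := heq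
    _ ≤ (ε + 3 * M ^ 2 * r) * (1 + C + C) + r⁻¹ * ∫ ω, ‖V ω‖ ^ 2 ∂P := by gcongr
    _ = ε * (1 + 2 * C) + 3 * M ^ 2 * (1 + 2 * C) * r + r⁻¹ * ∫ ω, ‖V ω‖ ^ 2 ∂P := by ring

end InnerProduct

theorem stmt_6_general (d : ℕ) (T M C₁ : ℝ) (hC₁ : 0 < C₁) :
    ∃ a c : ℝ, ∀ (ε : ℝ), 0 < ε → ε ≤ 1 →
      ∀ (Ω : Type) [MeasurableSpace Ω] (P : Measure Ω)
        [IsProbabilityMeasure P]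
        (Y : ℝ → Ω → EuclideanSpace ℝ (Fin d)) (Sig : ℝ → Ω → ℝ)
        (b : ℝ → Ω → EuclideanSpace ℝ (Fin d)),
        Measurable (Function.uncurry Y) → Measurable (Function.uncurry Sig) →
        Measurable (Function.uncurry b) →
        -- (i)
        (∀ s t : ℝ, 0 ≤ s → s ≤ t → t ≤ T →
          ∫ ω, ‖Y t ω - Y s ω‖ ^ 2 ∂P
            = ∫ τ in s..t, (∫ ω, (Sig τ ω + 2 * ⟪b τ ω, Y τ ω - Y s ω⟫) ∂P)) →
        -- (ii)
        (∀ τ ∈ Set.Icc (0:ℝ) T, Integrable (fun ω => ‖Y τ ω‖ ^ 2) P ∧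
          ∫ ω, ‖Y τ ω‖ ^ 2 ∂P ≤ C₁) →
        -- (iii)
        (∀ᵐ p ∂((volume.restrict (Set.Icc (0:ℝ) T)).prod P),
          |Sig p.1 p.2| ≤ ε * (1 + ‖Y p.1 p.2‖ ^ 2 + C₁) ∧
          ‖b p.1 p.2‖ ≤ M * (1 + ‖Y p.1 p.2‖ + Real.sqrt C₁)) →
        ∀ s t : ℝ, 0 ≤ s → s ≤ t → t ≤ T →
          ∫ ω, ‖Y t ω - Y s ω‖ ^ 2 ∂P
            ≤ ε * a * (t - s) + c * ((t - s) * Real.sqrt (t - s)) := by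
  set A := 1 + 2 * C₁
  set B := 3 * M ^ 2 * A
  refine ⟨A, B + (A + B + 4 * C₁) / 2, ?_⟩
  intro ε hε hε1 Ω _ P _ Y Sig b hY _ _ hi hii hiii s t hs hst htT
  have hsub : Icc s t ⊆ Icc 0 T := Icc_subset_Icc hs htT
  have hs' : s ∈ Icc s t := ⟨le_rfl, hst⟩
  have hL2 : ∀ τ ∈ Icc s t, MemLp (Y τ) 2 P := fun τ hτ =>
    (memLp_two_iff_integrable_sq_norm hY.of_uncurry_left.aestronglyMeasurable).2
      (hii τ (hsub hτ)).1
  have hmoment : ∀ τ ∈ Icc s t, ∫ ω, ‖Y τ ω - Y s ω‖ ^ 2 ∂P ≤ 4 * C₁ := fun τ hτ => by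
    linarith [integral_norm_sub_sq_le (hL2 τ hτ) (hL2 s hs'), (hii τ (hsub hτ)).2,
      (hii s (hsub hs')).2]
  have hdrift : ∀ r > 0, ∀ᵐ τ ∂volume.restrict (Icc s t),
      ∫ ω, (Sig τ ω + 2 * ⟪b τ ω, Y τ ω - Y s ω⟫) ∂P
        ≤ ε * A + B * r + r⁻¹ * ∫ ω, ‖Y τ ω - Y s ω‖ ^ 2 ∂P := by
    intro r hr
    filter_upwards [ae_restrict_of_ae_restrict_of_subset hsub (Measure.ae_ae_of_ae_prod hiii),
      ae_restrict_mem measurableSet_Icc] with τ hτ hτI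
    have hΔ := (memLp_two_iff_integrable_sq_norm ((hL2 τ hτI).sub (hL2 s hs')).1).1
      ((hL2 τ hτI).sub (hL2 s hs'))
    exact integral_add_two_mul_inner_le hr hε.le hC₁.le (hii τ (hsub hτI)).1
      (hii τ (hsub hτI)).2 hΔ hτ
  have hA : 0 ≤ A := by positivity
  calc ∫ ω, ‖Y t ω - Y s ω‖ ^ 2 ∂P
      ≤ ε * A * (t - s) + (B + (ε * A + B + 4 * C₁) / 2) * ((t - s) * √(t - s)) :=
        le_mul_add_mul_sqrt_of_eq_intervalIntegral hst (by positivity) (by positivity)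
          (fun u hu => hi s u hs hu.1 (hu.2.trans htT)) hmoment hdrift
    _ ≤ ε * A * (t - s) + (B + (A + B + 4 * C₁) / 2) * ((t - s) * √(t - s)) := by
        have : ε * A ≤ A := mul_le_of_le_one_left hA hε1
        gcongr

/-- time-increment estimate for the admissible process `Y` (inequality (25)
in the proof of Lemma 5 of the paper).  There are constants `a, c` depending only on
`M, T, C₁` such that for any `0 < ε ≤ 1` and any process satisfying (i)–(iii),
`E‖Y(t) − Y(s)‖² ≤ ε a (t−s) + c (t−s)^{3/2}` for all `0 ≤ s ≤ t ≤ T`. -/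
theorem stmt_6 (d : ℕ) (T M C₁ : ℝ) (hT : 0 < T) (hM : 0 < M) (hC₁ : 0 < C₁) :
    ∃ a c : ℝ, ∀ (ε : ℝ), 0 < ε → ε ≤ 1 →
      ∀ (Ω : Type) [MeasurableSpace Ω] (P : Measure Ω)
        [IsProbabilityMeasure P]
        (Y : ℝ → Ω → EuclideanSpace ℝ (Fin d)) (Sig : ℝ → Ω → ℝ)
        (b : ℝ → Ω → EuclideanSpace ℝ (Fin d)),
        Measurable (Function.uncurry Y) → Measurable (Function.uncurry Sig) →
        Measurable (Function.uncurry b) →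
        -- (i)
        (∀ s t : ℝ, 0 ≤ s → s ≤ t → t ≤ T →
          ∫ ω, ‖Y t ω - Y s ω‖ ^ 2 ∂P
            = ∫ τ in s..t, (∫ ω, (Sig τ ω + 2 * ⟪b τ ω, Y τ ω - Y s ω⟫) ∂P)) →
        -- (ii)
        (∀ τ ∈ Set.Icc (0:ℝ) T, Integrable (fun ω => ‖Y τ ω‖ ^ 2) P ∧
          ∫ ω, ‖Y τ ω‖ ^ 2 ∂P ≤ C₁) →
        -- (iii)
        (∀ᵐ p ∂((volume.restrict (Set.Icc (0:ℝ) T)).prod P),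
          |Sig p.1 p.2| ≤ ε * (1 + ‖Y p.1 p.2‖ ^ 2 + C₁) ∧
          ‖b p.1 p.2‖ ≤ M * (1 + ‖Y p.1 p.2‖ + Real.sqrt C₁)) →
        ∀ s t : ℝ, 0 ≤ s → s ≤ t → t ≤ T →
          ∫ ω, ‖Y t ω - Y s ω‖ ^ 2 ∂P
            ≤ ε * a * (t - s) + c * ((t - s) * Real.sqrt (t - s)) :=
  stmt_6_general d T M C₁ hC₁
end

section
/- Let (Ω, ℱ, P) be a probability space, T, R, C₁, C₂, C₃, C₄, C₅, C₆ > 0, 0 < ε ≤ 1, s ∈ [0,T], ξ ∈ ℝ^d, and let κ : [0,∞) → [0,∞) be increasing. Let (P, dist) be a metric space with ς : P → [0,∞), U a set, and g : [0,T] × ℝ^d × P × U → ℝ, σ : ℝ^d × P → ℝ satisfy the Lipschitz-with-growth bounds (A5): |σ(x',p') − σ(x'',p'')| ≤ R(‖x' − x''‖ + dist(p',p''))(1 + ‖x'‖ + ‖x''‖ + κ(ς(p')) + κ(ς(p''))) and |g(t,x',p',u) − g(t,x'',p'',u)| ≤ R(‖x' − x''‖ + dist(p',p''))(1 + ‖x'‖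 + ‖x''‖ + κ(ς(p')) + κ(ς(p''))). Let ζ, μ : [0,T] → P be flows with ς(ζ[t])² ≤ C₁, ς(μ[t])² ≤ C₂, and dist(ζ[t], μ[t])² ≤ C₅ ε for all t, let u : [s,T] × Ω → U be a measurable control, and let X, Y : [s,T] × Ω → ℝ^d be measurable processes with X(s) = Y(s) = ξ almost surely, E‖Y(t)‖² ≤ C₃(1 + ‖ξ‖²), E‖X(t)‖² ≤ C₄(1 + ‖ξ‖²), and E‖X(t) − Y(t)‖² ≤ C₆ ε (1 + ‖ξ‖²) for all t ∈ [s,T]. Then there exists a constant c depending only on R, T, κ, C₁, C₂, C₃, C₄, C₅, C₆ such that |E[σ(X(T), μ[T]) + ∫ₛᵀ g(t, X(t), μ[t], u(t)) dt] − E[σ(Y(T), ζ[T]) + ∫ₛᵀ g(t, Y(t), ζ[t], u(t)) dt]| ≤ c ε^{1/2} (1 + ‖ξ‖²). -/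
/-!
By (A5), each pointwise payoff difference is at most
`R (‖X - Y‖ + dist(μ, ζ)) (1 + ‖X‖ + ‖Y‖ + κ + κ)`. With `δ = √ε`, Young's inequality bounds this
by `(R / δ) ‖X - Y‖² + O(δ) (1 + ‖X‖² + ‖Y‖²)`, using `dist(μ, ζ)² ≤ C₅ δ²`. The second moment
bounds make the expectation of this majorant `O(δ (1 + ‖ξ‖²))` at every time, since
`E ‖X - Y‖² = O(δ² (1 + ‖ξ‖²))`; Tonelli in `(t, ω)` then handles the running payoff.
-/

open MeasureTheory

section Young

variable {E : Type*} [SeminormedAddCommGroup E]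

/-- The constants come from Young's inequality `(n + D) w ≤ (n + D)² / (2δ) + δ w² / 2` applied
to the (A5) bound, with `(n + D)² ≤ 2 n² + 2 D²` and `(1 + a + b + K)² ≤ 4 (1 + a² + b² + K²)`. -/
noncomputable def youngMajorant (R δ C K : ℝ) (x y : E) : ℝ :=
  R / δ * ‖x - y‖ ^ 2 + 2 * R * δ * (‖x‖ ^ 2 + ‖y‖ ^ 2) + R * δ * (C + 2 * (1 + K ^ 2))

theorem growth_le_youngMajorant {R δ C K D k₁ k₂ : ℝ} (x y : E) (hR : 0 ≤ R) (hδ : 0 < δ)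
    (hD : D ^ 2 ≤ C * δ ^ 2) (hk₁ : 0 ≤ k₁) (hk₂ : 0 ≤ k₂) (hK : k₁ + k₂ ≤ K) :
    R * (‖x - y‖ + D) * (1 + ‖x‖ + ‖y‖ + k₁ + k₂) ≤ youngMajorant R δ C K x y := by
  set n := ‖x - y‖
  set a := ‖x‖
  set b := ‖y‖
  set w := 1 + a + b + k₁ + k₂
  have ha : 0 ≤ a := norm_nonneg x
  have hb : 0 ≤ b := norm_nonneg y
  have hyoung : 2 * δ * ((n + D) * w) ≤ (n + D) ^ 2 + δ ^ 2 * w ^ 2 := by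
    nlinarith [sq_nonneg (n + D - δ * w)]
  have hnD : (n + D) ^ 2 ≤ 2 * n ^ 2 + 2 * C * δ ^ 2 := by nlinarith [sq_nonneg (n - D)]
  have hw : w ^ 2 ≤ 4 * (1 + a ^ 2 + b ^ 2 + K ^ 2) := by
    have hwK : w ≤ 1 + a + b + K := by simp only [w]; linarith
    have hw0 : 0 ≤ w := by positivity
    nlinarith [sq_nonneg (1 - a), sq_nonneg (1 - b), sq_nonneg (1 - K),
      sq_nonneg (a - b), sq_nonneg (a - K), sq_nonneg (b - K)]
  have hδw : δ ^ 2 * w ^ 2 ≤ δ ^ 2 * (4 * (1 + a ^ 2 + b ^ 2 + K ^ 2)) := by gcongr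
  have hmain : (n + D) * w ≤ n ^ 2 / δ + 2 * δ * (a ^ 2 + b ^ 2) + δ * (C + 2 * (1 + K ^ 2)) := by
    refine le_of_mul_le_mul_left ?_ hδ
    have hexp : δ * (n ^ 2 / δ + 2 * δ * (a ^ 2 + b ^ 2) + δ * (C + 2 * (1 + K ^ 2))) =
        n ^ 2 + δ ^ 2 * (2 * (a ^ 2 + b ^ 2) + C + 2 * (1 + K ^ 2)) := by
      field_simp
      ring
    rw [hexp]
    nlinarith
  calc R * (n + D) * w = R * ((n + D) * w) := by ring
    _ ≤ R * (n ^ 2 / δ + 2 * δ * (a ^ 2 + b ^ 2) + δ * (C + 2 * (1 + K ^ 2))) := by gcongr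
    _ = youngMajorant R δ C K x y := by unfold youngMajorant; ring

end Young

section Expectation

variable {Ω E : Type*} [MeasurableSpace Ω] {P : Measure Ω} [SeminormedAddCommGroup E]
  {X Y : Ω → E}

theorem integrable_youngMajorant [IsFiniteMeasure P] (R δ C K : ℝ)
    (hXY : Integrable (fun ω => ‖X ω - Y ω‖ ^ 2) P) (hX : Integrable (fun ω => ‖X ω‖ ^ 2) P)
    (hY : Integrable (fun ω => ‖Y ω‖ ^ 2) P) :
    Integrable (fun ω => youngMajorant R δ C K (X ω) (Y ω)) P :=
  ((hXY.const_mul _).add ((hX.add hY).const_mul _)).add (integrable_const _)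

theorem integral_youngMajorant_le [IsProbabilityMeasure P] {R δ C K C₃ C₄ C₆ Z : ℝ}
    (hR : 0 ≤ R) (hδ : 0 < δ) (hC : 0 ≤ C) (hZ : 1 ≤ Z)
    (hXY : Integrable (fun ω => ‖X ω - Y ω‖ ^ 2) P)
    (hXY_le : ∫ ω, ‖X ω - Y ω‖ ^ 2 ∂P ≤ C₆ * δ ^ 2 * Z)
    (hX : Integrable (fun ω => ‖X ω‖ ^ 2) P) (hX_le : ∫ ω, ‖X ω‖ ^ 2 ∂P ≤ C₄ * Z)
    (hY : Integrable (fun ω => ‖Y ω‖ ^ 2) P) (hY_le : ∫ ω, ‖Y ω‖ ^ 2 ∂P ≤ C₃ * Z) :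
    ∫ ω, youngMajorant R δ C K (X ω) (Y ω) ∂P ≤
      R * (C₆ + 2 * (C₄ + C₃) + C + 2 * (1 + K ^ 2)) * δ * Z := by
  have hint : ∫ ω, youngMajorant R δ C K (X ω) (Y ω) ∂P =
      R / δ * ∫ ω, ‖X ω - Y ω‖ ^ 2 ∂P +
        2 * R * δ * (∫ ω, ‖X ω‖ ^ 2 ∂P + ∫ ω, ‖Y ω‖ ^ 2 ∂P) + R * δ * (C + 2 * (1 + K ^ 2)) := by
    unfold youngMajorant
    rw [integral_add, integral_add, integral_const_mul, integral_const_mul, integral_add hX hY,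
      integral_const, probReal_univ, one_smul]
    all_goals fun_prop
  have hconst : 0 ≤ R * δ * (C + 2 * (1 + K ^ 2)) := by positivity
  calc ∫ ω, youngMajorant R δ C K (X ω) (Y ω) ∂P
      ≤ R / δ * (C₆ * δ ^ 2 * Z) + 2 * R * δ * (C₄ * Z + C₃ * Z) +
          R * δ * (C + 2 * (1 + K ^ 2)) * Z := by
        have hδR : 0 ≤ R / δ := by positivity
        rw [hint]
        refine add_le_add (add_le_add ?_ ?_) (le_mul_of_one_le_right hconst hZ) <;> gcongr
    _ = R * (C₆ + 2 * (C₄ + C₃) + C + 2 * (1 + K ^ 2)) * δ * Z := by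
        field_simp
        ring

end Expectation

theorem enorm_add_intervalIntegral_sub_le {a b r x₁ x₂ : ℝ} {g₁ g₂ q : ℝ → ℝ} (hab : a ≤ b)
    (hx : |x₁ - x₂| ≤ r) (hg : ∀ t ∈ Set.Ioc a b, |g₁ t - g₂ t| ≤ q t)
    (hg₁ : IntervalIntegrable g₁ volume a b) (hg₂ : IntervalIntegrable g₂ volume a b) :
    ‖(x₁ + ∫ t in a..b, g₁ t) - (x₂ + ∫ t in a..b, g₂ t)‖ₑ ≤
      ENNReal.ofReal r + ∫⁻ t in Set.Ioc a b, ENNReal.ofReal (q t) := by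
  have hsplit : (x₁ + ∫ t in a..b, g₁ t) - (x₂ + ∫ t in a..b, g₂ t) =
      (x₁ - x₂) + ∫ t in Set.Ioc a b, (g₁ t - g₂ t) := by
    rw [← intervalIntegral.integral_of_le hab, intervalIntegral.integral_sub hg₁ hg₂]
    ring
  have hrun : ‖∫ t in Set.Ioc a b, (g₁ t - g₂ t)‖ₑ ≤ ∫⁻ t in Set.Ioc a b, ENNReal.ofReal (q t) := by
    refine (enorm_integral_le_lintegral_enorm _).trans (setLIntegral_mono' measurableSet_Ioc ?_)
    intro t ht
    rw [Real.enorm_eq_ofReal_abs]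
    exact ENNReal.ofReal_le_ofReal (hg t ht)
  rw [hsplit]
  refine (enorm_add_le _ _).trans (add_le_add ?_ hrun)
  rw [Real.enorm_eq_ofReal_abs]
  exact ENNReal.ofReal_le_ofReal hx

section Payoff

variable {Ω : Type*} [MeasurableSpace Ω] {P : Measure Ω} {a b M : ℝ}

theorem lintegral_setLIntegral_ofReal_le [SFinite P] {q : ℝ → Ω → ℝ}
    (hq : Measurable (Function.uncurry q))
    (hq_int : ∀ t ∈ Set.Ioc a b, Integrable (q t) P)
    (hq_nonneg : ∀ t ∈ Set.Ioc a b, ∀ ω, 0 ≤ q t ω)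
    (hqM : ∀ t ∈ Set.Ioc a b, ∫ ω, q t ω ∂P ≤ M) :
    ∫⁻ ω, (∫⁻ t in Set.Ioc a b, ENNReal.ofReal (q t ω)) ∂P ≤
      ENNReal.ofReal M * ENNReal.ofReal (b - a) := by
  have hmeas : AEMeasurable (fun p : Ω × ℝ => ENNReal.ofReal (q p.2 p.1))
      (P.prod (volume.restrict (Set.Ioc a b))) :=
    (hq.comp measurable_swap).ennreal_ofReal.aemeasurable
  rw [lintegral_lintegral_swap hmeas, ← Real.volume_Ioc, ← setLIntegral_const]
  refine setLIntegral_mono' measurableSet_Ioc fun t ht => ?_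
  rw [← ofReal_integral_eq_lintegral_ofReal (hq_int t ht) (.of_forall (hq_nonneg t ht))]
  exact ENNReal.ofReal_le_ofReal (hqM t ht)

theorem abs_integral_payoff_sub_le [SFinite P] {F₁ F₂ : Ω → ℝ} {G₁ G₂ q : ℝ → Ω → ℝ}
    (hab : a ≤ b) (hq : Measurable (Function.uncurry q))
    (hq_int : ∀ t ∈ Set.Icc a b, Integrable (q t) P) (hqM : ∀ t ∈ Set.Icc a b, ∫ ω, q t ω ∂P ≤ M)
    (hF : ∀ ω, |F₁ ω - F₂ ω| ≤ q b ω) (hG : ∀ t ∈ Set.Ioc a b, ∀ ω, |G₁ t ω - G₂ t ω| ≤ q t ω)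
    (hG₁ : ∀ ω, IntervalIntegrable (G₁ · ω) volume a b)
    (hG₂ : ∀ ω, IntervalIntegrable (G₂ · ω) volume a b)
    (h₁ : Integrable (fun ω => F₁ ω + ∫ t in a..b, G₁ t ω) P)
    (h₂ : Integrable (fun ω => F₂ ω + ∫ t in a..b, G₂ t ω) P) :
    |(∫ ω, (F₁ ω + ∫ t in a..b, G₁ t ω) ∂P) - ∫ ω, (F₂ ω + ∫ t in a..b, G₂ t ω) ∂P| ≤
      (1 + (b - a)) * M := by
  have hbq : Integrable (q b) P := hq_int b ⟨hab, le_rfl⟩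
  have hqb_nonneg : ∀ ω, 0 ≤ q b ω := fun ω => (abs_nonneg _).trans (hF ω)
  have hM : 0 ≤ M := (integral_nonneg hqb_nonneg).trans (hqM b ⟨hab, le_rfl⟩)
  have hterminal : ∫⁻ ω, ENNReal.ofReal (q b ω) ∂P ≤ ENNReal.ofReal M := by
    rw [← ofReal_integral_eq_lintegral_ofReal hbq (.of_forall hqb_nonneg)]
    exact ENNReal.ofReal_le_ofReal (hqM b ⟨hab, le_rfl⟩)
  have hrunning := lintegral_setLIntegral_ofReal_le (P := P) (M := M) hq
    (fun t ht => hq_int t (Set.Ioc_subset_Icc_self ht))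
    (fun t ht ω => (abs_nonneg _).trans (hG t ht ω))
    (fun t ht => hqM t (Set.Ioc_subset_Icc_self ht))
  have hbound : ‖(∫ ω, (F₁ ω + ∫ t in a..b, G₁ t ω) ∂P) - ∫ ω, (F₂ ω + ∫ t in a..b, G₂ t ω) ∂P‖ₑ ≤
      ENNReal.ofReal ((1 + (b - a)) * M) := calc
    _ = ‖∫ ω, ((F₁ ω + ∫ t in a..b, G₁ t ω) - (F₂ ω + ∫ t in a..b, G₂ t ω)) ∂P‖ₑ := by
        rw [integral_sub h₁ h₂]
    _ ≤ ∫⁻ ω, ‖(F₁ ω + ∫ t in a..b, G₁ t ω) - (F₂ ω + ∫ t in a..b, G₂ t ω)‖ₑ ∂P :=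
        enorm_integral_le_lintegral_enorm _
    _ ≤ ∫⁻ ω, (ENNReal.ofReal (q b ω) + ∫⁻ t in Set.Ioc a b, ENNReal.ofReal (q t ω)) ∂P :=
        lintegral_mono fun ω => enorm_add_intervalIntegral_sub_le hab (hF ω)
          (fun t ht => hG t ht ω) (hG₁ ω) (hG₂ ω)
    _ = ∫⁻ ω, ENNReal.ofReal (q b ω) ∂P + ∫⁻ ω, (∫⁻ t in Set.Ioc a b, ENNReal.ofReal (q t ω)) ∂P :=
        lintegral_add_left (hq.comp measurable_prodMk_left).ennreal_ofReal _
    _ ≤ ENNReal.ofReal M + ENNReal.ofReal M * ENNReal.ofReal (b - a) :=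
        add_le_add hterminal hrunning
    _ = ENNReal.ofReal ((1 + (b - a)) * M) := by
        rw [← ENNReal.ofReal_mul hM, ← ENNReal.ofReal_add hM (mul_nonneg hM (sub_nonneg.2 hab))]
        ring_nf
  rw [Real.enorm_eq_ofReal_abs] at hbound
  exact (ENNReal.ofReal_le_ofReal_iff (mul_nonneg (by linarith) hM)).mp hbound

end Payoff

theorem stmt_14_general (d : ℕ) (T R C₁ C₂ C₃ C₄ C₅ C₆ : ℝ) (hR : 0 < R)
    (hC₃ : 0 < C₃) (hC₄ : 0 < C₄) (hC₅ : 0 < C₅)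
    (hC₆ : 0 < C₆) (κ : ℝ → ℝ)
    (hκ0 : ∀ r : ℝ, 0 ≤ r → 0 ≤ κ r)
    (hκmono : ∀ a b : ℝ, 0 ≤ a → a ≤ b → κ a ≤ κ b) :
    ∃ c : ℝ, ∀ (ε : ℝ), 0 < ε → ε ≤ 1 →
      ∀ s ∈ Set.Icc (0:ℝ) T, ∀ (ξ : EuclideanSpace ℝ (Fin d)),
      ∀ (Ω : Type) [MeasurableSpace Ω] (P : Measure Ω) [IsProbabilityMeasure P]
        (S : Type) [MetricSpace S] (ς : S → ℝ)
        (U : Type) [MeasurableSpace U]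
        (g : ℝ → EuclideanSpace ℝ (Fin d) → S → U → ℝ)
        (σ : EuclideanSpace ℝ (Fin d) → S → ℝ)
        (ζ μ : ℝ → S) (u : ℝ → Ω → U)
        (X Y : ℝ → Ω → EuclideanSpace ℝ (Fin d)),
        (∀ p : S, 0 ≤ ς p) →
        -- (A5) for σ
        (∀ (x' x'' : EuclideanSpace ℝ (Fin d)) (p' p'' : S),
          |σ x' p' - σ x'' p''| ≤ R * (‖x' - x''‖ + dist p' p'')
            * (1 + ‖x'‖ + ‖x''‖ + κ (ς p') + κ (ς p''))) →
        -- (A5) for g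
        (∀ t ∈ Set.Icc (0:ℝ) T, ∀ (x' x'' : EuclideanSpace ℝ (Fin d)) (p' p'' : S) (uu : U),
          |g t x' p' uu - g t x'' p'' uu| ≤ R * (‖x' - x''‖ + dist p' p'')
            * (1 + ‖x'‖ + ‖x''‖ + κ (ς p') + κ (ς p''))) →
        -- bounds on the flows
        (∀ t ∈ Set.Icc (0:ℝ) T, (ς (ζ t)) ^ 2 ≤ C₁ ∧ (ς (μ t)) ^ 2 ≤ C₂ ∧
          (dist (ζ t) (μ t)) ^ 2 ≤ C₅ * ε) →
        Measurable (Function.uncurry u) → Measurable (Function.uncurry X) →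
        Measurable (Function.uncurry Y) →
        (∀ᵐ ω ∂P, X s ω = ξ ∧ Y s ω = ξ) →
        -- moment bounds
        (∀ t ∈ Set.Icc s T, Integrable (fun ω => ‖Y t ω‖ ^ 2) P ∧
          ∫ ω, ‖Y t ω‖ ^ 2 ∂P ≤ C₃ * (1 + ‖ξ‖ ^ 2)) →
        (∀ t ∈ Set.Icc s T, Integrable (fun ω => ‖X t ω‖ ^ 2) P ∧
          ∫ ω, ‖X t ω‖ ^ 2 ∂P ≤ C₄ * (1 + ‖ξ‖ ^ 2)) →
        (∀ t ∈ Set.Icc s T, Integrable (fun ω => ‖X t ω - Y t ω‖ ^ 2) P ∧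
          ∫ ω, ‖X t ω - Y t ω‖ ^ 2 ∂P ≤ C₆ * ε * (1 + ‖ξ‖ ^ 2)) →
        -- integrability of the payoffs
        (∀ ω, IntervalIntegrable (fun t => g t (X t ω) (μ t) (u t ω)) volume s T) →
        (∀ ω, IntervalIntegrable (fun t => g t (Y t ω) (ζ t) (u t ω)) volume s T) →
        Integrable (fun ω => σ (X T ω) (μ T) + ∫ t in s..T, g t (X t ω) (μ t) (u t ω)) P →
        Integrable (fun ω => σ (Y T ω) (ζ T) + ∫ t in s..T, g t (Y t ω) (ζ t) (u t ω)) P →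
        |(∫ ω, (σ (X T ω) (μ T) + ∫ t in s..T, g t (X t ω) (μ t) (u t ω)) ∂P)
          - ∫ ω, (σ (Y T ω) (ζ T) + ∫ t in s..T, g t (Y t ω) (ζ t) (u t ω)) ∂P|
          ≤ c * Real.sqrt ε * (1 + ‖ξ‖ ^ 2) := by
  set K := κ (Real.sqrt C₂) + κ (Real.sqrt C₁)
  set B := R * (C₆ + 2 * (C₄ + C₃) + C₅ + 2 * (1 + K ^ 2))
  refine ⟨B * (1 + T), ?_⟩
  intro ε hε _ s hs ξ Ω _ P _ S _ ς U _ g σ ζ μ u X Y hς hσ hg hflow _ hXm hYm _ hYmom hXmom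
    hXYmom hgX hgY hpayX hpayY
  set δ := Real.sqrt ε
  have hδ : 0 < δ := Real.sqrt_pos.mpr hε
  have hεδ : ε = δ ^ 2 := (Real.sq_sqrt hε.le).symm
  have hξ : 1 ≤ 1 + ‖ξ‖ ^ 2 := le_add_of_nonneg_right (sq_nonneg _)
  have hgrowth : ∀ t ∈ Set.Icc 0 T, ∀ x y : EuclideanSpace ℝ (Fin d),
      R * (‖x - y‖ + dist (μ t) (ζ t)) * (1 + ‖x‖ + ‖y‖ + κ (ς (μ t)) + κ (ς (ζ t))) ≤
        youngMajorant R δ C₅ K x y := by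
    intro t ht x y
    obtain ⟨hζ, hμ, hdist⟩ := hflow t ht
    refine growth_le_youngMajorant x y hR.le hδ (by rwa [dist_comm, ← hεδ])
      (hκ0 _ (hς _)) (hκ0 _ (hς _)) (add_le_add ?_ ?_)
    · exact hκmono _ _ (hς _) (Real.le_sqrt_of_sq_le hμ)
    · exact hκmono _ _ (hς _) (Real.le_sqrt_of_sq_le hζ)
  have hsT : Set.Icc s T ⊆ Set.Icc 0 T := Set.Icc_subset_Icc_left hs.1
  refine (abs_integral_payoff_sub_le (q := fun t ω => youngMajorant R δ C₅ K (X t ω) (Y t ω))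
    hs.2 (by unfold youngMajorant; fun_prop)
    (fun t ht => integrable_youngMajorant _ _ _ _ (hXYmom t ht).1 (hXmom t ht).1 (hYmom t ht).1)
    (fun t ht => integral_youngMajorant_le hR.le hδ hC₅.le hξ (hXYmom t ht).1
      (hεδ ▸ (hXYmom t ht).2) (hXmom t ht).1 (hXmom t ht).2 (hYmom t ht).1 (hYmom t ht).2)
    (fun ω => (hσ _ _ _ _).trans (hgrowth T (hsT ⟨hs.2, le_rfl⟩) _ _))
    (fun t ht ω => (hg t (hsT (Set.Ioc_subset_Icc_self ht)) _ _ _ _ _).trans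
      (hgrowth t (hsT (Set.Ioc_subset_Icc_self ht)) _ _))
    hgX hgY hpayX hpayY).trans ?_
  calc (1 + (T - s)) * (B * δ * (1 + ‖ξ‖ ^ 2)) ≤ (1 + T) * (B * δ * (1 + ‖ξ‖ ^ 2)) :=
        mul_le_mul_of_nonneg_right (by linarith [hs.1]) (by positivity)
    _ = B * (1 + T) * δ * (1 + ‖ξ‖ ^ 2) := by ring

/-- payoff-closeness estimate (inequality (35) in the proof of Theorem 1
of the paper).  The expected payoffs of the admissible process `Y` (with flow `ζ`) and of
the companion deterministic-dynamics process `X` (with flow `μ`), started at `ξ` at time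
`s` with the same control, differ by at most `c √ε (1 + ‖ξ‖²)`, where `c` depends only on
`R, T, κ, C₁, …, C₆`. -/
theorem stmt_14 (d : ℕ) (T R C₁ C₂ C₃ C₄ C₅ C₆ : ℝ) (hT : 0 < T) (hR : 0 < R)
    (hC₁ : 0 < C₁) (hC₂ : 0 < C₂) (hC₃ : 0 < C₃) (hC₄ : 0 < C₄) (hC₅ : 0 < C₅)
    (hC₆ : 0 < C₆) (κ : ℝ → ℝ)
    (hκ0 : ∀ r : ℝ, 0 ≤ r → 0 ≤ κ r)
    (hκmono : ∀ a b : ℝ, 0 ≤ a → a ≤ b → κ a ≤ κ b) :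
    ∃ c : ℝ, ∀ (ε : ℝ), 0 < ε → ε ≤ 1 →
      ∀ s ∈ Set.Icc (0:ℝ) T, ∀ (ξ : EuclideanSpace ℝ (Fin d)),
      ∀ (Ω : Type) [MeasurableSpace Ω] (P : Measure Ω) [IsProbabilityMeasure P]
        (S : Type) [MetricSpace S] (ς : S → ℝ)
        (U : Type) [MeasurableSpace U]
        (g : ℝ → EuclideanSpace ℝ (Fin d) → S → U → ℝ)
        (σ : EuclideanSpace ℝ (Fin d) → S → ℝ)
        (ζ μ : ℝ → S) (u : ℝ → Ω → U)
        (X Y : ℝ → Ω → EuclideanSpace ℝ (Fin d)),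
        (∀ p : S, 0 ≤ ς p) →
        -- (A5) for σ
        (∀ (x' x'' : EuclideanSpace ℝ (Fin d)) (p' p'' : S),
          |σ x' p' - σ x'' p''| ≤ R * (‖x' - x''‖ + dist p' p'')
            * (1 + ‖x'‖ + ‖x''‖ + κ (ς p') + κ (ς p''))) →
        -- (A5) for g
        (∀ t ∈ Set.Icc (0:ℝ) T, ∀ (x' x'' : EuclideanSpace ℝ (Fin d)) (p' p'' : S) (uu : U),
          |g t x' p' uu - g t x'' p'' uu| ≤ R * (‖x' - x''‖ + dist p' p'')
            * (1 + ‖x'‖ + ‖x''‖ + κ (ς p') + κ (ς p''))) →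
        -- bounds on the flows
        (∀ t ∈ Set.Icc (0:ℝ) T, (ς (ζ t)) ^ 2 ≤ C₁ ∧ (ς (μ t)) ^ 2 ≤ C₂ ∧
          (dist (ζ t) (μ t)) ^ 2 ≤ C₅ * ε) →
        Measurable (Function.uncurry u) → Measurable (Function.uncurry X) →
        Measurable (Function.uncurry Y) →
        (∀ᵐ ω ∂P, X s ω = ξ ∧ Y s ω = ξ) →
        -- moment bounds
        (∀ t ∈ Set.Icc s T, Integrable (fun ω => ‖Y t ω‖ ^ 2) P ∧
          ∫ ω, ‖Y t ω‖ ^ 2 ∂P ≤ C₃ * (1 + ‖ξ‖ ^ 2)) →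
        (∀ t ∈ Set.Icc s T, Integrable (fun ω => ‖X t ω‖ ^ 2) P ∧
          ∫ ω, ‖X t ω‖ ^ 2 ∂P ≤ C₄ * (1 + ‖ξ‖ ^ 2)) →
        (∀ t ∈ Set.Icc s T, Integrable (fun ω => ‖X t ω - Y t ω‖ ^ 2) P ∧
          ∫ ω, ‖X t ω - Y t ω‖ ^ 2 ∂P ≤ C₆ * ε * (1 + ‖ξ‖ ^ 2)) →
        -- integrability of the payoffs
        (∀ ω, IntervalIntegrable (fun t => g t (X t ω) (μ t) (u t ω)) volume s T) →
        (∀ ω, IntervalIntegrable (fun t => g t (Y t ω) (ζ t) (u t ω)) volume s T) →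
        Integrable (fun ω => σ (X T ω) (μ T) + ∫ t in s..T, g t (X t ω) (μ t) (u t ω)) P →
        Integrable (fun ω => σ (Y T ω) (ζ T) + ∫ t in s..T, g t (Y t ω) (ζ t) (u t ω)) P →
        |(∫ ω, (σ (X T ω) (μ T) + ∫ t in s..T, g t (X t ω) (μ t) (u t ω)) ∂P)
          - ∫ ω, (σ (Y T ω) (ζ T) + ∫ t in s..T, g t (Y t ω) (ζ t) (u t ω)) ∂P|
          ≤ c * Real.sqrt ε * (1 + ‖ξ‖ ^ 2) :=
  stmt_14_general d T R C₁ C₂ C₃ C₄ C₅ C₆ hR hC₃ hC₄ hC₅ hC₆ κ hκ0 hκmono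
end
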